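/- For every number of processes n ≥ 2, there is a wait-free strongly linearizable implementation of the one-shot contest object using (n-1)-window registers. -/

import Mathlib

set_option autoImplicit false

/-! ## Base objects and primitives -/

/-- A base object: a shared-memory object accessed via atomic primitives.
Responses of primitives are encoded as lists of naturals. -/
structure BaseObject : Type 1 where
  State : Type
  init : State
  Prim : Type
  apply : Prim → State → State × List ℕ

/-- A base object has *interfering* primitives if at any state, the application of
any pair of primitives either commutes or one overwrites the other. -/
def Interfering (B : BaseObject) : Prop :=
  ∀ (f g : B.Prim) (s : B.State),
    (B.apply g (B.apply f s).1).1 = (B.apply f (B.apply g s).1).1 ∨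
    (B.apply f (B.apply g s).1).1 = (B.apply f s).1 ∨
    (B.apply g (B.apply f s).1).1 = (B.apply g s).1

/-- A read/write register: primitive `some v` writes `v`, primitive `none` reads. -/
def RWRegister : BaseObject where
  State := ℕ
  init := 0
  Prim := Option ℕ
  apply := fun p s =>
    match p with
    | some v => (v, [])
    | none => (s, [s])

/-- A `w`-window register stores the sequence of the last `w` values written to it;
`some v` appends `v` (dropping the oldest value if the length exceeds `w`),
`none` reads the stored sequence. -/
def WindowRegister (w : ℕ) : BaseObject where
  State := List ℕ
  init := []
  Prim := Option ℕ
  apply := fun p s =>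
    match p with
    | some v => ((s ++ [v]).drop (s.length + 1 - w), [])
    | none => (s, s)

/-- A test&set object: `T&S()` atomically sets the bit and returns the previous value. -/
def TestAndSet : BaseObject where
  State := Bool
  init := false
  Prim := Unit
  apply := fun _ s => (true, [if s then 1 else 0])

/-! ## Sequential specifications -/

/-- A (possibly nondeterministic) sequential specification for `n` processes.
`δ s i op s' r` holds if process `i` invoking `op` in state `s` may move the object
to state `s'` returning `r`.  `allowed i hist op` says whether process `i`, having
already invoked the operations `hist`, may invoke `op` (used to express one-shot
objects and the referee/competitor roles). -/
structure Spec (n : ℕ) : Type 1 where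
  Op : Type
  Res : Type
  State : Type
  init : State
  δ : State → Fin n → Op → State → Res → Prop
  allowed : Fin n → List Op → Op → Bool

/-- Valid sequential executions of a specification, starting at a given state. -/
inductive SeqRun {n : ℕ} (S : Spec n) : S.State → List (Fin n × S.Op × S.Res) → Prop
  | nil (s : S.State) : SeqRun S s []
  | cons {s : S.State} {i : Fin n} {op : S.Op} {s' : S.State} {r : S.Res}
      {l : List (Fin n × S.Op × S.Res)} :
      S.δ s i op s' r → SeqRun S s' l → SeqRun S s ((i, op, r) :: l)

/-! ## Implementations, configurations and executions -/

/-- Events of an execution: high-level invocations/responses and primitive steps. -/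
inductive Event (n : ℕ) (S : Spec n) : Type
  | inv (i : Fin n) (op : S.Op)
  | res (i : Fin n) (r : S.Res)
  | step (i : Fin n)

/-- The process performing an event. -/
def Event.proc {n : ℕ} {S : Spec n} : Event n S → Fin n
  | .inv i _ => i
  | .res i _ => i
  | .step i => i

/-- An implementation of the high-level object `S` for `n` processes from base objects
`M o`, `o : ι`: a deterministic state machine per process.  In local state `ℓ`,
process `i`'s next primitive step applies `prim i ℓ` to base object `obj i ℓ` and
updates the local state with the response via `updL`; `ret i ℓ` is the response of the
current high-level operation once it is ready. -/
structure Impl (n : ℕ) (S : Spec n) (ι : Type) (M : ι → BaseObject) : Type 1 where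
  Local : Fin n → Type
  initL : ∀ i, Local i
  invokeL : ∀ i, S.Op → Local i → Local i
  obj : ∀ i, Local i → ι
  prim : ∀ i (ℓ : Local i), (M (obj i ℓ)).Prim
  updL : ∀ i, Local i → List ℕ → Local i
  ret : ∀ i, Local i → Option S.Res

/-- A configuration: states of all base objects and all processes
(local state, pending operation, history of invoked operations). -/
structure Config {n : ℕ} {S : Spec n} {ι : Type} {M : ι → BaseObject}
    (A : Impl n S ι M) : Type where
  mem : ∀ o, (M o).State
  loc : ∀ i, A.Local i
  pend : Fin n → Option S.Op
  hist : Fin n → List S.Op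

open Classical in
/-- Update the state of one base object in the memory. -/
noncomputable def updMem {ι : Type} {M : ι → BaseObject}
    (mem : ∀ o, (M o).State) (o : ι) (s : (M o).State) : ∀ o', (M o').State :=
  fun o' =>
    if h : o' = o then cast (congrArg (fun x => (M x).State) h).symm s else mem o'

open Classical in
/-- The (deterministic) transition of a configuration by an event; `none` if the event
is not enabled.  An invocation requires the process to be idle and the operation to be
allowed by the specification; a primitive step requires a pending operation whose
response is not yet ready; a response requires the response to be ready. -/
noncomputable def nextConfig {n : ℕ} {S : Spec n} {ι : Type} {M : ι → BaseObject}
    (A : Impl n S ι M) (C : Config A) : Event n S → Option (Config A)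
  | .inv i op =>
    match C.pend i with
    | some _ => none
    | none =>
      if S.allowed i (C.hist i) op then
        some { C with
          pend := Function.update C.pend i (some op)
          hist := Function.update C.hist i (C.hist i ++ [op])
          loc := Function.update C.loc i (A.invokeL i op (C.loc i)) }
      else none
  | .step i =>
    match C.pend i with
    | none => none
    | some _ =>
      if A.ret i (C.loc i) = none then
        some { C with
          mem := updMem C.mem (A.obj i (C.loc i))
            ((M (A.obj i (C.loc i))).apply (A.prim i (C.loc i))
              (C.mem (A.obj i (C.loc i)))).1
          loc := Function.update C.loc i
            (A.updL i (C.loc i)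
              ((M (A.obj i (C.loc i))).apply (A.prim i (C.loc i))
                (C.mem (A.obj i (C.loc i)))).2) }
      else none
  | .res i r =>
    match C.pend i with
    | none => none
    | some _ =>
      if A.ret i (C.loc i) = some r then
        some { C with pend := Function.update C.pend i none }
      else none

/-- The initial configuration. -/
def initConfig {n : ℕ} {S : Spec n} {ι : Type} {M : ι → BaseObject}
    (A : Impl n S ι M) : Config A :=
  { mem := fun o => (M o).init
    loc := fun i => A.initL i
    pend := fun _ => none
    hist := fun _ => [] }

/-- The configuration reached by a finite sequence of events from the initial
configuration (`none` if the sequence is not a valid execution). -/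
noncomputable def execConfig {n : ℕ} {S : Spec n} {ι : Type} {M : ι → BaseObject}
    (A : Impl n S ι M) (α : List (Event n S)) : Option (Config A) :=
  α.foldlM (fun C e => nextConfig A C e) (initConfig A)

/-- `α` is a (finite) execution of the implementation `A`. -/
def IsExec {n : ℕ} {S : Spec n} {ι : Type} {M : ι → BaseObject}
    (A : Impl n S ι M) (α : List (Event n S)) : Prop :=
  (execConfig A α).isSome = true

/-- The length-`m` prefix of an infinite sequence of events. -/
def prefE {n : ℕ} {S : Spec n} (E : ℕ → Event n S) (m : ℕ) : List (Event n S) :=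
  (List.range m).map E

/-! ## Linearizability -/

/-- In execution `α`, the invocation at position `j` is matched by the response at
position `k` with output `r` (no earlier response of the same process intervening). -/
def Matches {n : ℕ} {S : Spec n} (α : List (Event n S)) (j k : ℕ) (r : S.Res) : Prop :=
  ∃ i op, α[j]? = some (Event.inv i op) ∧ α[k]? = some (Event.res i r) ∧ j < k ∧
    ∀ m, j < m → m < k → ∀ r', α[m]? ≠ some (Event.res i r')

/-- The operation invoked at position `j` precedes (returns before the invocation of)
the operation invoked at position `j'`. -/
def Precedes {n : ℕ} {S : Spec n} (α : List (Event n S)) (j j' : ℕ) : Prop :=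
  ∃ k r, Matches α j k r ∧ k < j'

/-- `σ` is a linearization of the execution `α`: a sequence of operation instances of
`α` (identified by the position of their invocation, paired with a response) that
contains every complete operation of `α` with its actual output and possibly some
pending ones, respects the real-time order of `α`, and is a valid sequential
execution of the specification. -/
structure IsLinearization {n : ℕ} (S : Spec n) (α : List (Event n S))
    (σ : List (ℕ × S.Res)) : Prop where
  inv_mem : ∀ p ∈ σ, ∃ i op, α[p.1]? = some (Event.inv i op)
  nodup : (σ.map Prod.fst).Nodup
  complete_mem : ∀ j k r, Matches α j k r → (j, r) ∈ σ
  complete_out : ∀ j k r r', Matches α j k r → (j, r') ∈ σ → r' = r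
  realtime : σ.Pairwise (fun a b => ¬ Precedes α b.1 a.1)
  valid : ∃ l : List (Fin n × S.Op × S.Res),
    List.Forall₂ (fun (p : ℕ × S.Res) (e : Fin n × S.Op × S.Res) =>
      α[p.1]? = some (Event.inv e.1 e.2.1) ∧ p.2 = e.2.2) σ l ∧
    SeqRun S S.init l

/-- `L` is a linearization function for `A`: it maps every execution to a
linearization of it. -/
def IsLinFun {n : ℕ} {S : Spec n} {ι : Type} {M : ι → BaseObject}
    (A : Impl n S ι M) (L : List (Event n S) → List (ℕ × S.Res)) : Prop :=
  ∀ α, IsExec A α → IsLinearization S α (L α)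

/-- `L` is prefix-closed: the linearization of a prefix is a prefix of the
linearization of an extension. -/
def PrefixClosedLin {n : ℕ} {S : Spec n} {ι : Type} {M : ι → BaseObject}
    (A : Impl n S ι M) (L : List (Event n S) → List (ℕ × S.Res)) : Prop :=
  ∀ α β, IsExec A (α ++ β) → L α <+: L (α ++ β)

/-- `L` is subsequence-closed: the linearization of a prefix is a subsequence of the
linearization of an extension. -/
def SubseqClosedLin {n : ℕ} {S : Spec n} {ι : Type} {M : ι → BaseObject}
    (A : Impl n S ι M) (L : List (Event n S) → List (ℕ × S.Res)) : Prop :=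
  ∀ α β, IsExec A (α ++ β) → List.Sublist (L α) (L (α ++ β))

/-- Strong linearizability: there is a prefix-closed linearization function. -/
def StronglyLinearizable {n : ℕ} {S : Spec n} {ι : Type} {M : ι → BaseObject}
    (A : Impl n S ι M) : Prop :=
  ∃ L, IsLinFun A L ∧ PrefixClosedLin A L

/-- Decisive linearizability: there is a subsequence-closed linearization function. -/
def DecisivelyLinearizable {n : ℕ} {S : Spec n} {ι : Type} {M : ι → BaseObject}
    (A : Impl n S ι M) : Prop :=
  ∃ L, IsLinFun A L ∧ SubseqClosedLin A L

/-! ## Progress conditions -/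

/-- Wait-freedom: in every infinite execution, a process that takes infinitely many
primitive steps completes infinitely many operations. -/
def WaitFree {n : ℕ} {S : Spec n} {ι : Type} {M : ι → BaseObject}
    (A : Impl n S ι M) : Prop :=
  ∀ E : ℕ → Event n S, (∀ m, IsExec A (prefE E m)) →
    ∀ i : Fin n, (∀ m, ∃ m', m ≤ m' ∧ E m' = Event.step i) →
      ∀ m, ∃ m', m ≤ m' ∧ ∃ r, E m' = Event.res i r

/-- Lock-freedom: in every infinite execution, infinitely many operations complete. -/
def LockFree {n : ℕ} {S : Spec n} {ι : Type} {M : ι → BaseObject}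
    (A : Impl n S ι M) : Prop :=
  ∀ E : ℕ → Event n S, (∀ m, IsExec A (prefE E m)) →
    ∀ m, ∃ m', m ≤ m' ∧ ∃ i r, E m' = Event.res i r

/-! ## High-level object specifications -/

/-- Queue: operation `some v` is `enqueue(v)` (returning `none`), operation `none` is
`dequeue()`, returning the oldest enqueued value not yet dequeued (`some v`) or
`none` (empty). -/
def QueueSpec (n : ℕ) : Spec n where
  Op := Option ℕ
  Res := Option ℕ
  State := List ℕ
  init := []
  δ := fun s _ op s' r =>
    (∃ v, op = some v ∧ s' = s ++ [v] ∧ r = none) ∨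
    (op = none ∧ ((s = [] ∧ s' = [] ∧ r = none) ∨ ∃ v t, s = v :: t ∧ s' = t ∧ r = some v))
  allowed := fun _ _ _ => true

/-- Stack: operation `some v` is `push(v)` (returning `none`), operation `none` is
`pop()`, returning the most recently pushed value not yet popped (`some v`) or
`none` (empty). -/
def StackSpec (n : ℕ) : Spec n where
  Op := Option ℕ
  Res := Option ℕ
  State := List ℕ
  init := []
  δ := fun s _ op s' r =>
    (∃ v, op = some v ∧ s' = v :: s ∧ r = none) ∨
    (op = none ∧ ((s = [] ∧ s' = [] ∧ r = none) ∨ ∃ v t, s = v :: t ∧ s' = t ∧ r = some v))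
  allowed := fun _ _ _ => true

/-- Operations of the (one-shot or long-lived) contest objects. -/
inductive ContestOp : Type
  | compete
  | decide

/-- The one-shot contest object for `n` processes: each competitor `p_1, …, p_{n-1}`
may invoke `compete()` once, which always returns `true`; the referee `p_0` may invoke
`decide()` once, which returns the index of the first process that executed
`compete()` (`Sum.inr i`) or `false` (`Sum.inl false`) if there is no such operation. -/
def ContestSpec (n : ℕ) : Spec n where
  Op := ContestOp
  Res := Bool ⊕ ℕ
  State := Option (Fin n) × Bool
  init := (none, false)
  δ := fun s i op s' r =>
    (op = ContestOp.compete ∧ i.val ≠ 0 ∧ r = Sum.inl true ∧ s'.2 = s.2 ∧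
      s'.1 = (match s.1 with | some j => some j | none => some i)) ∨
    (op = ContestOp.decide ∧ i.val = 0 ∧ s.2 = false ∧ s' = (s.1, true) ∧
      r = (match s.1 with | some j => Sum.inr j.val | none => Sum.inl false))
  allowed := fun i hist op =>
    hist.isEmpty &&
      (match op with
       | ContestOp.compete => i.val != 0
       | ContestOp.decide => i.val == 0)

/-- The long-lived contest object for `n` processes: each competitor `p_1, …, p_{n-1}`
may invoke `compete()` any number of times (returning nothing, i.e. `none`); the
referee `p_0` may invoke `decide()` at most once, which returns `some x` for some
integer `x` such that every competitor has executed at most `x` operations so far. -/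
def LLContestSpec (n : ℕ) : Spec n where
  Op := ContestOp
  Res := Option ℕ
  State := (Fin n → ℕ) × Bool
  init := (fun _ => 0, false)
  δ := fun s i op s' r =>
    (op = ContestOp.compete ∧ i.val ≠ 0 ∧
      s' = (Function.update s.1 i (s.1 i + 1), s.2) ∧ r = none) ∨
    (op = ContestOp.decide ∧ i.val = 0 ∧ s.2 = false ∧ s'.2 = true ∧ s'.1 = s.1 ∧
      ∃ x : ℕ, r = some x ∧ ∀ j : Fin n, j.val ≠ 0 → s.1 j ≤ x)
  allowed := fun i hist op =>
    match op with
    | ContestOp.compete => i.val != 0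
    | ContestOp.decide => (i.val == 0) && hist.isEmpty

/-- Counter: operation `true` is `increment()` (returning `none`), operation `false`
is `read()`, returning the number of increments so far. -/
def CounterSpec (n : ℕ) : Spec n where
  Op := Bool
  Res := Option ℕ
  State := ℕ
  init := 0
  δ := fun s _ op s' r =>
    (op = true ∧ s' = s + 1 ∧ r = none) ∨ (op = false ∧ s' = s ∧ r = some s)
  allowed := fun _ _ _ => true

/-- Max register: operation `some v` is `maxWrite(v)` (returning `none`), operation
`none` is `maxRead()`, returning the largest value written so far. -/
def MaxRegSpec (n : ℕ) : Spec n where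
  Op := Option ℕ
  Res := Option ℕ
  State := ℕ
  init := 0
  δ := fun s _ op s' r =>
    (∃ v, op = some v ∧ s' = max s v ∧ r = none) ∨ (op = none ∧ s' = s ∧ r = some s)
  allowed := fun _ _ _ => true

/-- Snapshot with `n` components: operation `Sum.inl (j, v)` atomically updates
component `j` to `v` (returning `none`); operation `Sum.inr ()` is `scan()`,
atomically returning all components. -/
def SnapshotSpec (n : ℕ) : Spec n where
  Op := (Fin n × ℕ) ⊕ Unit
  Res := Option (Fin n → ℕ)
  State := Fin n → ℕ
  init := fun _ => 0
  δ := fun s _ op s' r =>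
    (∃ j v, op = Sum.inl (j, v) ∧ s' = Function.update s j v ∧ r = none) ∨
    (op = Sum.inr () ∧ s' = s ∧ r = some s)
  allowed := fun _ _ _ => true

/-- Fetch&increment: atomically returns the current value and increments it. -/
def FetchIncSpec (n : ℕ) : Spec n where
  Op := Unit
  Res := ℕ
  State := ℕ
  init := 0
  δ := fun s _ _ s' r => s' = s + 1 ∧ r = s
  allowed := fun _ _ _ => true

/-- Fetch&add: `fetch&add(v)` atomically returns the current value and adds `v`. -/
def FetchAddSpec (n : ℕ) : Spec n where
  Op := ℕ
  Res := ℕ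
  State := ℕ
  init := 0
  δ := fun s _ op s' r => s' = s + op ∧ r = s
  allowed := fun _ _ _ => true

/-!
The implementation uses a single `(n-1)`-window register. A competitor writes its own index
and returns `true`; the referee reads the window and returns its first value, or `false` if it
is empty. Every operation consists of one primitive step, and is linearized at that step.
At most `n - 1` competitors write, once each, so the window never drops a value and holds the
competitors in the order of their writes: the referee reads the first competitor linearized
before it, as the specification demands. Linearization points, once passed, never move,
which makes the linearization function prefix-closed; and no process ever takes a second
step, which gives wait-freedom.
-/

section Executions

variable {n : ℕ} {S : Spec n} {ι : Type} {M : ι → BaseObject} {A : Impl n S ι M}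

theorem execConfig_append_singleton (α : List (Event n S)) (e : Event n S) :
    execConfig A (α ++ [e]) = (execConfig A α).bind (nextConfig A · e) := by
  simp [execConfig, List.foldlM_append]

theorem updMem_apply_self (mem : ∀ o, (M o).State) (o : ι) (s : (M o).State) :
    updMem mem o s o = s := by
  simp [updMem]

theorem nextConfig_inv_eq_some {C C' : Config A} {i : Fin n} {op : S.Op}
    (h : nextConfig A C (.inv i op) = some C') :
    C.pend i = none ∧ S.allowed i (C.hist i) op = true ∧
      C' = { C with
        pend := Function.update C.pend i (some op)
        hist := Function.update C.hist i (C.hist i ++ [op])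
        loc := Function.update C.loc i (A.invokeL i op (C.loc i)) } := by
  rcases hp : C.pend i with _ | _ <;> simp only [nextConfig, hp] at h
  · split_ifs at h with hallowed
    exact ⟨rfl, hallowed, (Option.some.inj h).symm⟩
  · simp at h

theorem nextConfig_step_eq_some {C C' : Config A} {i : Fin n}
    (h : nextConfig A C (.step i) = some C') :
    (C.pend i).isSome ∧ A.ret i (C.loc i) = none ∧
      C' = { C with
        mem := updMem C.mem (A.obj i (C.loc i))
          ((M (A.obj i (C.loc i))).apply (A.prim i (C.loc i))
            (C.mem (A.obj i (C.loc i)))).1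
        loc := Function.update C.loc i
          (A.updL i (C.loc i)
            ((M (A.obj i (C.loc i))).apply (A.prim i (C.loc i))
              (C.mem (A.obj i (C.loc i)))).2) } := by
  rcases hp : C.pend i with _ | _ <;> simp only [nextConfig, hp] at h
  · simp at h
  · split_ifs at h with hret
    exact ⟨rfl, hret, (Option.some.inj h).symm⟩

theorem nextConfig_res_eq_some {C C' : Config A} {i : Fin n} {r : S.Res}
    (h : nextConfig A C (.res i r) = some C') :
    (C.pend i).isSome ∧ A.ret i (C.loc i) = some r ∧
      C' = { C with pend := Function.update C.pend i none } := by
  rcases hp : C.pend i with _ | _ <;> simp only [nextConfig, hp] at h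
  · simp at h
  · split_ifs at h with hret
    exact ⟨rfl, hret, (Option.some.inj h).symm⟩

theorem getElem?_prefE {E : ℕ → Event n S} {m k : ℕ} (hk : k < m) :
    (prefE E m)[k]? = some (E k) := by
  simp [prefE, hk]

end Executions

section Traces

variable {n : ℕ} {S : Spec n}

def traceOf (α : List (Event n S)) (i : Fin n) : List (Event n S × ℕ) :=
  α.zipIdx.filter fun p => p.1.proc = i

theorem mem_traceOf {α : List (Event n S)} {i : Fin n} {e : Event n S} {m : ℕ} :
    (e, m) ∈ traceOf α i ↔ α[m]? = some e ∧ e.proc = i := by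
  simp [traceOf, List.mem_zipIdx_iff_getElem?]

theorem traceOf_append_singleton_of_proc_eq (α : List (Event n S)) {e : Event n S}
    {i : Fin n} (h : e.proc = i) : traceOf (α ++ [e]) i = traceOf α i ++ [(e, α.length)] := by
  simp [traceOf, List.zipIdx_append, h]

theorem traceOf_append_singleton_of_proc_ne (α : List (Event n S)) {e : Event n S}
    {i : Fin n} (h : e.proc ≠ i) : traceOf (α ++ [e]) i = traceOf α i := by
  simp [traceOf, List.zipIdx_append, h]

theorem pairwise_snd_lt_zipIdx {γ : Type*} (l : List γ) (k : ℕ) :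
    (l.zipIdx k).Pairwise (·.2 < ·.2) := by
  induction l generalizing k with
  | nil => simp
  | cons a l ih =>
    refine List.pairwise_cons.2 ⟨fun p hp => ?_, ih (k + 1)⟩
    have := List.le_snd_of_mem_zipIdx hp
    omega

theorem traceOf_pairwise (α : List (Event n S)) (i : Fin n) :
    (traceOf α i).Pairwise (·.2 < ·.2) :=
  (pairwise_snd_lt_zipIdx α 0).filter _

end Traces

inductive SeqRunTo {n : ℕ} (S : Spec n) :
    S.State → List (Fin n × S.Op × S.Res) → S.State → Prop
  | nil (s : S.State) : SeqRunTo S s [] s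
  | cons {s : S.State} {i : Fin n} {op : S.Op} {s' : S.State} {r : S.Res}
      {l : List (Fin n × S.Op × S.Res)} {s'' : S.State} :
      S.δ s i op s' r → SeqRunTo S s' l s'' → SeqRunTo S s ((i, op, r) :: l) s''

namespace SeqRunTo

variable {n : ℕ} {S : Spec n} {s s' : S.State} {l : List (Fin n × S.Op × S.Res)}

theorem seqRun (h : SeqRunTo S s l s') : SeqRun S s l := by
  induction h with
  | nil => exact .nil _
  | cons hδ _ ih => exact .cons hδ ih

theorem snoc (h : SeqRunTo S s l s') {i : Fin n} {op : S.Op} {s'' : S.State} {r : S.Res}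
    (hδ : S.δ s' i op s'' r) : SeqRunTo S s (l ++ [(i, op, r)]) s'' := by
  induction h with
  | nil => exact .cons hδ (.nil _)
  | cons hδ' _ ih => exact .cons hδ' (ih hδ)

end SeqRunTo

theorem WindowRegister.apply_write_of_length_lt {w : ℕ} {s : List ℕ} (hs : s.length < w)
    (v : ℕ) : (WindowRegister w).apply (some v) s = (s ++ [v], []) := by
  show ((s ++ [v]).drop (s.length + 1 - w), []) = _
  rw [Nat.sub_eq_zero_of_le hs, List.drop_zero]

theorem WindowRegister.apply_read (w : ℕ) (s : List ℕ) :
    (WindowRegister w).apply none s = (s, s) :=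
  rfl

theorem List.Nodup.length_add_two_le_card {α : Type*} [Fintype α] {l : List α}
    (hl : l.Nodup) {a b : α} (hab : a ≠ b) (ha : a ∉ l) (hb : b ∉ l) :
    l.length + 2 ≤ Fintype.card α :=
  List.Nodup.length_le_card (l := a :: b :: l) (by simp [*])

namespace WindowContest

variable {n : ℕ}

def opOf (i : Fin n) : (ContestSpec n).Op :=
  if i.val = 0 then .decide else .compete

def readResult : List ℕ → Bool ⊕ ℕ
  | [] => .inl false
  | v :: _ => .inr v

def impl (n : ℕ) : Impl n (ContestSpec n) Unit (fun _ => WindowRegister (n - 1)) where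
  Local := fun _ => Option (Bool ⊕ ℕ)
  initL := fun _ => none
  invokeL := fun _ _ _ => none
  obj := fun _ _ => ()
  prim := fun i _ => if i.val = 0 then none else some i.val
  updL := fun i _ resp => some (if i.val = 0 then readResult resp else .inl true)
  ret := fun _ ℓ => ℓ

/-- A linearized operation; `inv` and `step` are the positions of its invocation and of its
primitive step in the execution. -/
structure Entry (n : ℕ) where
  proc : Fin n
  inv : ℕ
  step : ℕ
  res : (ContestSpec n).Res

structure Ghost (n : ℕ) where
  invAt : Fin n → ℕ
  lin : List (Entry n)

def writtenBy (lin : List (Entry n)) : List (Fin n) :=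
  (lin.map Entry.proc).filter (·.val ≠ 0)

def stepResult (written : List (Fin n)) (i : Fin n) : (ContestSpec n).Res :=
  if i.val = 0 then readResult (written.map Fin.val) else .inl true

def Ghost.next (g : Ghost n) : Event n (ContestSpec n) × ℕ → Ghost n
  | (.inv i _, m) => { g with invAt := Function.update g.invAt i m }
  | (.res _ _, _) => g
  | (.step i, m) =>
    { g with lin := g.lin ++ [⟨i, g.invAt i, m, stepResult (writtenBy g.lin) i⟩] }

def ghost (α : List (Event n (ContestSpec n))) : Ghost n :=
  α.zipIdx.foldl Ghost.next ⟨fun _ => 0, []⟩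

def linOf (α : List (Event n (ContestSpec n))) : List (ℕ × (ContestSpec n).Res) :=
  (ghost α).lin.map fun t => (t.inv, t.res)

theorem ghost_append_singleton (α : List (Event n (ContestSpec n)))
    (e : Event n (ContestSpec n)) : ghost (α ++ [e]) = (ghost α).next (e, α.length) := by
  simp [ghost, List.zipIdx_append]

theorem lin_prefix_foldl_next (l : List (Event n (ContestSpec n) × ℕ)) (g : Ghost n) :
    g.lin <+: (l.foldl Ghost.next g).lin := by
  induction l generalizing g with
  | nil => exact List.prefix_refl _
  | cons p l ih =>
    refine List.IsPrefix.trans ?_ (ih (g.next p))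
    rcases p with ⟨_ | _ | _, _⟩ <;> simp [Ghost.next]

theorem linOf_prefix_append (α β : List (Event n (ContestSpec n))) :
    linOf α <+: linOf (α ++ β) := by
  unfold linOf ghost
  rw [List.zipIdx_append, List.foldl_append]
  exact (lin_prefix_foldl_next _ _).map _

def Entry.toSpec (t : Entry n) : Fin n × (ContestSpec n).Op × (ContestSpec n).Res :=
  (t.proc, opOf t.proc, t.res)

def specStateOf (lin : List (Entry n)) : (ContestSpec n).State :=
  ((writtenBy lin).head?, lin.any (·.proc.val = 0))

inductive Phase (g : Ghost n) (C : Config (impl n)) (i : Fin n)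
    (tr : List (Event n (ContestSpec n) × ℕ)) : Prop
  | idle : tr = [] → C.hist i = [] → C.pend i = none → (∀ t ∈ g.lin, t.proc ≠ i) →
      Phase g C i tr
  | invoked : tr = [(.inv i (opOf i), g.invAt i)] → C.hist i = [opOf i] →
      C.pend i = some (opOf i) → C.loc i = none → (∀ t ∈ g.lin, t.proc ≠ i) →
      Phase g C i tr
  | stepped (k : ℕ) (r : (ContestSpec n).Res) :
      tr = [(.inv i (opOf i), g.invAt i), (.step i, k)] → ⟨i, g.invAt i, k, r⟩ ∈ g.lin →
      C.hist i = [opOf i] → C.pend i = some (opOf i) → C.loc i = some r → Phase g C i tr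
  | responded (k : ℕ) (r : (ContestSpec n).Res) (l : ℕ) :
      tr = [(.inv i (opOf i), g.invAt i), (.step i, k), (.res i r, l)] →
      ⟨i, g.invAt i, k, r⟩ ∈ g.lin → C.hist i = [opOf i] → C.pend i = none →
      C.loc i = some r → Phase g C i tr

structure Invariant (α : List (Event n (ContestSpec n))) (C : Config (impl n)) : Prop where
  mem_eq : C.mem () = (writtenBy (ghost α).lin).map Fin.val
  run : SeqRunTo (ContestSpec n) (ContestSpec n).init ((ghost α).lin.map Entry.toSpec)
    (specStateOf (ghost α).lin)
  nodup : ((ghost α).lin.map Entry.proc).Nodup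
  sorted : (ghost α).lin.Pairwise (·.step < ·.step)
  phase : ∀ i, Phase (ghost α) C i (traceOf α i)

theorem Phase.mono {g g' : Ghost n} {C C' : Config (impl n)} {i : Fin n}
    {tr : List (Event n (ContestSpec n) × ℕ)} (h : Phase g C i tr)
    (hinv : g'.invAt i = g.invAt i) (hsub : g.lin ⊆ g'.lin)
    (hnew : ∀ t ∈ g'.lin, t ∈ g.lin ∨ t.proc ≠ i) (hhist : C'.hist i = C.hist i)
    (hpend : C'.pend i = C.pend i) (hloc : C'.loc i = C.loc i) : Phase g' C' i tr := by
  have hfree : (∀ t ∈ g.lin, t.proc ≠ i) → ∀ t ∈ g'.lin, t.proc ≠ i := fun hi t ht =>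
    (hnew t ht).elim (hi t) id
  cases h with
  | idle htr hh hp hi => exact .idle htr (hhist ▸ hh) (hpend ▸ hp) (hfree hi)
  | invoked htr hh hp hl hi =>
    exact .invoked (hinv ▸ htr) (hhist ▸ hh) (hpend ▸ hp) (hloc ▸ hl) (hfree hi)
  | stepped k r htr ht hh hp hl =>
    exact .stepped k r (hinv ▸ htr) (hinv ▸ hsub ht) (hhist ▸ hh) (hpend ▸ hp) (hloc ▸ hl)
  | responded k r l htr ht hh hp hl =>
    exact .responded k r l (hinv ▸ htr) (hinv ▸ hsub ht) (hhist ▸ hh) (hpend ▸ hp)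
      (hloc ▸ hl)

namespace Invariant

variable {α : List (Event n (ContestSpec n))} {C : Config (impl n)}

theorem eq_of_proc_eq (h : Invariant α C) {t u : Entry n} (ht : t ∈ (ghost α).lin)
    (hu : u ∈ (ghost α).lin) (hproc : t.proc = u.proc) : t = u :=
  List.inj_on_of_nodup_map h.nodup ht hu hproc

theorem traceOf_proc (h : Invariant α C) {t : Entry n} (ht : t ∈ (ghost α).lin) :
    ∃ rest, traceOf α t.proc =
      (.inv t.proc (opOf t.proc), t.inv) :: (.step t.proc, t.step) :: rest ∧
      ∀ p ∈ rest, p.1 = .res t.proc t.res := by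
  cases h.phase t.proc with
  | idle _ _ _ hfree => exact absurd rfl (hfree t ht)
  | invoked _ _ _ _ hfree => exact absurd rfl (hfree t ht)
  | stepped k r htr hmem =>
    rw [h.eq_of_proc_eq ht hmem rfl]
    exact ⟨[], htr, by simp⟩
  | responded k r l htr hmem =>
    rw [h.eq_of_proc_eq ht hmem rfl]
    exact ⟨[_], htr, by simp⟩

theorem getElem?_inv (h : Invariant α C) {t : Entry n} (ht : t ∈ (ghost α).lin) :
    α[t.inv]? = some (.inv t.proc (opOf t.proc)) := by
  obtain ⟨rest, htr, -⟩ := h.traceOf_proc ht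
  exact (mem_traceOf.1 (htr ▸ List.mem_cons_self ..)).1

theorem getElem?_step (h : Invariant α C) {t : Entry n} (ht : t ∈ (ghost α).lin) :
    α[t.step]? = some (.step t.proc) := by
  obtain ⟨rest, htr, -⟩ := h.traceOf_proc ht
  exact (mem_traceOf.1 (htr ▸ List.mem_cons_of_mem _ (List.mem_cons_self ..))).1

theorem inv_lt_step (h : Invariant α C) {t : Entry n} (ht : t ∈ (ghost α).lin) :
    t.inv < t.step := by
  obtain ⟨rest, htr, -⟩ := h.traceOf_proc ht
  have hsorted := traceOf_pairwise α t.proc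
  rw [htr] at hsorted
  simp_all

theorem step_lt_of_res (h : Invariant α C) {t : Entry n} (ht : t ∈ (ghost α).lin) {m : ℕ}
    {r : (ContestSpec n).Res} (hm : α[m]? = some (.res t.proc r)) : t.step < m ∧ r = t.res := by
  obtain ⟨rest, htr, hrest⟩ := h.traceOf_proc ht
  have hsorted := traceOf_pairwise α t.proc
  have hmem := (mem_traceOf (i := t.proc)).2 ⟨hm, rfl⟩
  rw [htr] at hsorted hmem
  simp only [List.mem_cons, Prod.mk.injEq, reduceCtorEq, false_and, false_or] at hmem
  refine ⟨?_, (Event.res.inj (hrest _ hmem)).2⟩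
  exact (List.pairwise_cons.1 (List.pairwise_cons.1 hsorted).2).1 _ hmem

theorem exists_entry_of_matches (h : Invariant α C) {j k : ℕ} {r : (ContestSpec n).Res}
    (hM : Matches α j k r) : ∃ t ∈ (ghost α).lin, t.inv = j ∧ t.res = r := by
  obtain ⟨i, op, hj, hk, -⟩ := hM
  have hinv := (mem_traceOf (i := i)).2 ⟨hj, rfl⟩
  have hres := (mem_traceOf (i := i)).2 ⟨hk, rfl⟩
  cases h.phase i with
  | idle htr => simp [htr] at hres
  | invoked htr => simp [htr] at hres
  | stepped k r htr => simp [htr] at hres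
  | responded k' r' l htr hmem =>
    simp only [htr, List.mem_cons, Prod.mk.injEq, reduceCtorEq, false_and, List.not_mem_nil,
      or_false, false_or] at hinv hres
    exact ⟨_, hmem, hinv.2.symm, (Event.res.inj hres.1).2.symm⟩

end Invariant

theorem writtenBy_append_singleton (lin : List (Entry n)) (t : Entry n) :
    writtenBy (lin ++ [t]) = writtenBy lin ++ if t.proc.val = 0 then [] else [t.proc] := by
  by_cases h : t.proc.val = 0 <;> simp [writtenBy, h]

theorem specStateOf_δ {lin : List (Entry n)} {i : Fin n} (hfree : ∀ t ∈ lin, t.proc ≠ i)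
    (j k : ℕ) :
    (ContestSpec n).δ (specStateOf lin) i (opOf i)
      (specStateOf (lin ++ [⟨i, j, k, stepResult (writtenBy lin) i⟩]))
      (stepResult (writtenBy lin) i) := by
  by_cases hi : i.val = 0
  · have hundecided : lin.any (·.proc.val = 0) = false := by
      simpa using fun t ht h0 => hfree t ht (Fin.ext (h0.trans hi.symm))
    refine Or.inr ⟨by simp [opOf, hi], hi, hundecided, ?_, ?_⟩
    · simp [specStateOf, writtenBy_append_singleton, hi, hundecided]
    · simp only [stepResult, hi, specStateOf]
      cases writtenBy lin <;> rfl
  · refine Or.inl ⟨by simp [opOf, hi], hi, by simp [stepResult, hi], ?_, ?_⟩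
    · simp [specStateOf, hi]
    · simp only [specStateOf, writtenBy_append_singleton, hi]
      cases writtenBy lin <;> rfl

theorem length_writtenBy_lt {lin : List (Entry n)} (hnodup : (lin.map Entry.proc).Nodup)
    {i : Fin n} (hi : i.val ≠ 0) (hfree : ∀ t ∈ lin, t.proc ≠ i) :
    (writtenBy lin).length < n - 1 := by
  have hw : (writtenBy lin).Nodup := hnodup.filter _
  have hi_not_mem : i ∉ writtenBy lin := fun hmem => by
    obtain ⟨t, ht, rfl⟩ := List.mem_map.1 (List.mem_of_mem_filter hmem)
    exact hfree t ht rfl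
  have hcard := hw.length_add_two_le_card (a := i) (b := ⟨0, by omega⟩)
    (fun h => hi (congrArg Fin.val h)) hi_not_mem (by simp [writtenBy])
  rw [Fintype.card_fin] at hcard
  omega

theorem eq_opOf_of_allowed {i : Fin n} {hist : List (ContestSpec n).Op}
    {op : (ContestSpec n).Op} (h : (ContestSpec n).allowed i hist op = true) :
    hist = [] ∧ op = opOf i := by
  simp only [ContestSpec, Bool.and_eq_true] at h
  refine ⟨List.isEmpty_iff.1 h.1, ?_⟩
  cases op <;> by_cases hi : i.val = 0 <;> simp_all [opOf] <;> rfl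

theorem impl_apply_prim {i : Fin n} (ℓ : (impl n).Local i) {w : List ℕ}
    (hw : i.val ≠ 0 → w.length < n - 1) :
    (WindowRegister (n - 1)).apply ((impl n).prim i ℓ) w =
      if i.val = 0 then (w, w) else (w ++ [i.val], []) := by
  by_cases hi : i.val = 0
  · simp only [impl, hi, if_true]
    exact WindowRegister.apply_read _ _
  · simp only [impl, hi, if_false]
    exact WindowRegister.apply_write_of_length_lt (hw hi) _

theorem Invariant.nil : Invariant [] (initConfig (impl n)) where
  mem_eq := rfl
  run := .nil _
  nodup := List.nodup_nil
  sorted := List.Pairwise.nil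
  phase _ := .idle rfl rfl rfl (by simp [ghost])

namespace Invariant

variable {α : List (Event n (ContestSpec n))} {C C' : Config (impl n)}

theorem snoc_inv (h : Invariant α C) {i : Fin n} {op : (ContestSpec n).Op}
    (hC : nextConfig (impl n) C (.inv i op) = some C') : Invariant (α ++ [.inv i op]) C' := by
  obtain ⟨hpend, hallowed, rfl⟩ := nextConfig_inv_eq_some hC
  have hg : ghost (α ++ [.inv i op]) =
      { ghost α with invAt := Function.update (ghost α).invAt i α.length } :=
    ghost_append_singleton α _
  refine ⟨hg ▸ h.mem_eq, hg ▸ h.run, hg ▸ h.nodup, hg ▸ h.sorted, fun i' => ?_⟩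
  by_cases hi' : i' = i
  · subst hi'
    cases h.phase i' with
    | idle htr hhist _ hfree =>
      obtain ⟨-, rfl⟩ := eq_opOf_of_allowed (hhist ▸ hallowed)
      refine .invoked ?_ (by simp [hhist]) (by simp) (by simp [impl]) (hg ▸ hfree)
      rw [traceOf_append_singleton_of_proc_eq α (i := i') rfl, htr, hg]
      simp
    | invoked _ hhist | stepped _ _ _ _ hhist | responded _ _ _ _ _ hhist =>
      exact absurd (eq_opOf_of_allowed (hhist ▸ hallowed)).1 (by simp)
  · rw [traceOf_append_singleton_of_proc_ne α (Ne.symm hi')]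
    exact (h.phase i').mono (by simp [hg, hi']) (by simp [hg])
      (fun t ht => .inl (by simpa [hg] using ht)) (by simp [hi']) (by simp [hi']) (by simp [hi'])

theorem snoc_res (h : Invariant α C) {i : Fin n} {r : (ContestSpec n).Res}
    (hC : nextConfig (impl n) C (.res i r) = some C') : Invariant (α ++ [.res i r]) C' := by
  obtain ⟨hpend, hloc, rfl⟩ := nextConfig_res_eq_some hC
  have hg : ghost (α ++ [.res i r]) = ghost α := ghost_append_singleton α _
  refine ⟨hg ▸ h.mem_eq, hg ▸ h.run, hg ▸ h.nodup, hg ▸ h.sorted, fun i' => hg ▸ ?_⟩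
  by_cases hi' : i' = i
  · subst hi'
    cases h.phase i' with
    | idle _ _ hp | responded _ _ _ _ _ _ hp => simp [hp] at hpend
    | invoked _ _ _ hl => exact absurd (hl.symm.trans hloc) (by simp)
    | stepped k r' htr hmem hhist _ hl =>
      obtain rfl : r' = r := Option.some.inj (hl.symm.trans hloc)
      refine .responded k r' α.length ?_ hmem hhist (by simp) hl
      rw [traceOf_append_singleton_of_proc_eq α (i := i') rfl, htr]
      rfl
  · rw [traceOf_append_singleton_of_proc_ne α (Ne.symm hi')]
    exact (h.phase i').mono rfl (fun _ => id) (fun t ht => .inl ht) rfl (by simp [hi']) rfl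

theorem snoc_step (h : Invariant α C) {i : Fin n}
    (hC : nextConfig (impl n) C (.step i) = some C') : Invariant (α ++ [.step i]) C' := by
  obtain ⟨hpend, hloc, rfl⟩ := nextConfig_step_eq_some hC
  obtain ⟨htr, hhist, hpend, hfree⟩ : traceOf α i = [(.inv i (opOf i), (ghost α).invAt i)] ∧
      C.hist i = [opOf i] ∧ C.pend i = some (opOf i) ∧ ∀ t ∈ (ghost α).lin, t.proc ≠ i := by
    cases h.phase i with
    | idle _ _ hp | responded _ _ _ _ _ _ hp => simp [hp] at hpend
    | invoked htr hh hp _ hfree => exact ⟨htr, hh, hp, hfree⟩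
    | stepped _ _ _ _ _ _ hl => exact absurd (hl.symm.trans hloc) (by simp)
  set t : Entry n := ⟨i, (ghost α).invAt i, α.length, stepResult (writtenBy (ghost α).lin) i⟩
  have hg : ghost (α ++ [.step i]) = { ghost α with lin := (ghost α).lin ++ [t] } :=
    ghost_append_singleton α _
  have happly := impl_apply_prim (w := (writtenBy (ghost α).lin).map Fin.val) (C.loc i)
    fun hi => by
    simpa using length_writtenBy_lt h.nodup hi hfree
  refine ⟨?_, ?_, ?_, ?_, fun i' => ?_⟩
  · show updMem C.mem () _ () = _
    rw [updMem_apply_self, h.mem_eq, happly, hg, writtenBy_append_singleton]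
    split_ifs <;> simp <;> rfl
  · rw [hg, List.map_append]
    exact h.run.snoc (specStateOf_δ hfree _ _)
  · rw [hg, List.map_append, List.nodup_append]
    exact ⟨h.nodup, List.nodup_singleton _, by simpa using hfree⟩
  · rw [hg, List.pairwise_append]
    refine ⟨h.sorted, List.pairwise_singleton _ _, fun u hu t' ht' => ?_⟩
    rw [List.mem_singleton.1 ht']
    exact (List.getElem?_eq_some_iff.1 (h.getElem?_step hu)).1
  · by_cases hi' : i' = i
    · subst hi'
      refine .stepped α.length t.res ?_ (by simp [hg, t]) hhist hpend ?_
      · rw [traceOf_append_singleton_of_proc_eq α (i := i') rfl, htr, hg]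
        rfl
      · show Function.update C.loc i' ((impl n).updL i' (C.loc i')
          ((WindowRegister (n - 1)).apply _ (C.mem ())).2) i' = _
        rw [Function.update_self, h.mem_eq, happly]
        by_cases hi : i'.val = 0 <;> simp [impl, t, stepResult, hi] <;> rfl
    · rw [traceOf_append_singleton_of_proc_ne α (Ne.symm hi')]
      refine (h.phase i').mono (by simp [hg]) (by simp [hg]) (fun u hu => ?_) rfl rfl
        (by simp [hi'])
      simp only [hg, List.mem_append, List.mem_singleton] at hu
      exact hu.imp_right fun hu => by simp [hu, t, Ne.symm hi']

theorem of_execConfig {α : List (Event n (ContestSpec n))} :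
    ∀ {C : Config (impl n)}, execConfig (impl n) α = some C → Invariant α C := by
  induction α using List.reverseRecOn with
  | nil =>
    intro C hC
    cases hC
    exact .nil
  | append_singleton α e ih =>
    intro C' hC'
    rw [execConfig_append_singleton] at hC'
    obtain ⟨C, hC, hstep⟩ := Option.bind_eq_some_iff.1 hC'
    cases e with
    | inv i op => exact (ih hC).snoc_inv hstep
    | res i r => exact (ih hC).snoc_res hstep
    | step i => exact (ih hC).snoc_step hstep

theorem eq_of_getElem?_step (h : Invariant α C) {i : Fin n} {m m' : ℕ}
    (hm : α[m]? = some (.step i)) (hm' : α[m']? = some (.step i)) : m = m' := by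
  have hmem := (mem_traceOf (i := i)).2 ⟨hm, rfl⟩
  have hmem' := (mem_traceOf (i := i)).2 ⟨hm', rfl⟩
  cases h.phase i with
  | idle htr | invoked htr => simp [htr] at hmem
  | stepped _ _ htr | responded _ _ _ htr =>
    simp only [htr, List.mem_cons, Prod.mk.injEq, reduceCtorEq, false_and, List.not_mem_nil,
      or_false, false_or] at hmem hmem'
    exact hmem.2.trans hmem'.2.symm

theorem eq_of_inv_eq (h : Invariant α C) {t u : Entry n} (ht : t ∈ (ghost α).lin)
    (hu : u ∈ (ghost α).lin) (hinv : t.inv = u.inv) : t = u := by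
  have hproc := h.getElem?_inv ht
  rw [hinv, h.getElem?_inv hu] at hproc
  exact h.eq_of_proc_eq ht hu (Event.inv.inj (Option.some.inj hproc)).1.symm

theorem isLinearization (h : Invariant α C) : IsLinearization (ContestSpec n) α (linOf α) where
  inv_mem p hp := by
    obtain ⟨t, ht, rfl⟩ := List.mem_map.1 hp
    exact ⟨_, _, h.getElem?_inv ht⟩
  nodup := by
    rw [linOf, List.map_map]
    exact (h.nodup.of_map _).map_on fun t ht u hu => h.eq_of_inv_eq ht hu
  complete_mem j k r hM := by
    obtain ⟨t, ht, rfl, rfl⟩ := h.exists_entry_of_matches hM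
    exact List.mem_map.2 ⟨t, ht, rfl⟩
  complete_out j k r r' hM hmem := by
    obtain ⟨t, ht, rfl, rfl⟩ := h.exists_entry_of_matches hM
    obtain ⟨u, hu, hut⟩ := List.mem_map.1 hmem
    obtain ⟨hinv, rfl⟩ := Prod.mk.inj hut
    rw [h.eq_of_inv_eq hu ht hinv]
  realtime := by
    rw [linOf, List.pairwise_map]
    refine h.sorted.imp_of_mem fun ha hb hlt ⟨k, r, hM, hk⟩ => ?_
    obtain ⟨i, op, hj, hres, -⟩ := hM
    have hinv := h.getElem?_inv hb
    rw [hj] at hinv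
    obtain ⟨rfl, -⟩ := Event.inv.inj (Option.some.inj hinv)
    have := (h.step_lt_of_res hb hres).1
    have := h.inv_lt_step ha
    omega
  valid := by
    refine ⟨(ghost α).lin.map Entry.toSpec, ?_, h.run.seqRun⟩
    rw [linOf, List.forall₂_map_left_iff, List.forall₂_map_right_iff, List.forall₂_same]
    exact fun t ht => ⟨h.getElem?_inv ht, rfl⟩

end Invariant

theorem waitFree : WaitFree (impl n) := by
  intro E hE i hsteps m
  exfalso
  obtain ⟨m₁, -, hm₁⟩ := hsteps 0
  obtain ⟨m₂, hle, hm₂⟩ := hsteps (m₁ + 1)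
  obtain ⟨C, hC⟩ := Option.isSome_iff_exists.1 (hE (m₂ + 1))
  have h₁ : (prefE E (m₂ + 1))[m₁]? = some (.step i) := hm₁ ▸ getElem?_prefE (by omega)
  have h₂ : (prefE E (m₂ + 1))[m₂]? = some (.step i) := hm₂ ▸ getElem?_prefE (by omega)
  have := (Invariant.of_execConfig hC).eq_of_getElem?_step h₁ h₂
  omega

theorem stronglyLinearizable : StronglyLinearizable (impl n) := by
  refine ⟨linOf, fun α hα => ?_, fun α β _ => linOf_prefix_append α β⟩
  obtain ⟨C, hC⟩ := Option.isSome_iff_exists.1 hα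
  exact (Invariant.of_execConfig hC).isLinearization

end WindowContest

/-- For every number of processes `n ≥ 2`, there is a wait-free
strongly linearizable implementation of the one-shot contest object using
`(n-1)`-window registers. -/
theorem contest_from_window_registers :
    ∀ n : ℕ, 2 ≤ n →
    ∃ (ι : Type) (A : Impl n (ContestSpec n) ι (fun _ => WindowRegister (n - 1))),
      WaitFree A ∧ StronglyLinearizable A :=
  fun n _ =>
    ⟨Unit, WindowContest.impl n, WindowContest.waitFree, WindowContest.stronglyLinearizable⟩
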